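/- Properties of the modular conjugation: define the antilinear map Jₙ on L²(ℝⁿ, ℂ) by (Jₙψ)(θ₁,…,θₙ) := (∏_{1≤i<j≤n} S₂(θⱼ−θᵢ))·conj(ψ(θ₁,…,θₙ)). Then: (a) Jₙ is an antilinear isometric involution, Jₙ∘Jₙ = 1 and ⟨Jₙψ, Jₙφ⟩ = ⟨φ, ψ⟩; (b) Jₙ∘Pₙ = Pₙ∘Kₙ, where Kₙ is the antilinear map (Kₙψ)(θ₁,…,θₙ) := conj(ψ(θₙ,…,θ₁)); in particular Jₙψ = Kₙψ for every ψ with Pₙψ = ψ, and Jₙ maps ℋₙ := range(Pₙ) onto itself. -/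

import Mathlib

open MeasureTheory Complex

noncomputable section

/-- The `n`-fold L² space over rapidity variables. -/
abbrev Hsp (n : ℕ) : Type := Lp ℂ 2 (volume : Measure (Fin n → ℝ))

/-- The transposition τᵢ = (i, i+1) (0-based) in the symmetric group Sₙ. -/
def tau (n i : ℕ) (h : i + 1 < n) : Equiv.Perm (Fin n) :=
  Equiv.swap ⟨i, Nat.lt_of_succ_lt h⟩ ⟨i + 1, h⟩

/-- `D` is the S₂-twisted representation of Sₙ on L²(ℝⁿ) determined on the
transpositions τᵢ by `(D(τᵢ)ψ)(θ) = S₂(θ_{i+1} − θ_i)·ψ(θ ∘ τᵢ)`. -/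
def IsZamoRep (S₂ : ℝ → ℂ) (n : ℕ)
    (D : Equiv.Perm (Fin n) →* unitary (Hsp n →L[ℂ] Hsp n)) : Prop :=
  ∀ (i : ℕ) (hi : i + 1 < n) (ψ : Hsp n),
    ∀ᵐ θ ∂(volume : Measure (Fin n → ℝ)),
      ((D (tau n i hi) : Hsp n →L[ℂ] Hsp n) ψ) θ
        = S₂ (θ ⟨i + 1, hi⟩ - θ ⟨i, Nat.lt_of_succ_lt hi⟩)
            * ψ (fun m => θ (tau n i hi m))

/-- The symmetrization Pₙ = (1/n!)·Σ_{π ∈ Sₙ} Dₙ(π). -/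
def symProj {n : ℕ}
    (D : Equiv.Perm (Fin n) →* unitary (Hsp n →L[ℂ] Hsp n)) :
    Hsp n →L[ℂ] Hsp n :=
  (n.factorial : ℂ)⁻¹ • ∑ π : Equiv.Perm (Fin n), (D π : Hsp n →L[ℂ] Hsp n)

/-- The product ∏_{1 ≤ i < j ≤ n} S₂(θⱼ − θᵢ). -/
def pairProd (S₂ : ℝ → ℂ) {n : ℕ} (θ : Fin n → ℝ) : ℂ :=
  ∏ p ∈ Finset.univ.filter (fun p : Fin n × Fin n => p.1 < p.2), S₂ (θ p.2 - θ p.1)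

/-!
Extending the defining relation of `D` from the transpositions `τᵢ` to all of `Sₙ`, `D(π)`
multiplies by the product `S^π(θ)` of `S₂` over the inversions of `π`; this is a cocycle because
`S₂(t) S₂(-t) = 1`. The factor of `J` is `S^ρ` for the order-reversing permutation `ρ`, so
`J = D(ρ) K`, and since the pairs `i < j` split into the inversions of `π` and those of `πρ`, `J`
commutes with every `D(π)`. Hence `J Pₙ = Pₙ J = Pₙ D(ρ) K = Pₙ K`, and on `ℋₙ`, where `D(ρ)`
acts trivially, `J = K`. Part (a) holds pointwise because `|∏ S₂| = 1`.
-/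

open Finset

namespace Equiv.Perm

variable {α M : Type*} [Fintype α] [LinearOrder α]

section CommMonoid

variable [CommMonoid M]

def inversionProd (g : α → α → M) (π : Perm α) : M :=
  ∏ p ∈ univ.filter (fun p : α × α => p.1 < p.2),
    if π p.2 < π p.1 then g (π p.1) (π p.2) else 1

theorem prod_filter_lt_comp_perm (π : Perm α) {F : α → α → M} (hF : ∀ x y, F x y = F y x) :
    ∏ p ∈ univ.filter (fun p : α × α => p.1 < p.2), F (π p.1) (π p.2) =
      ∏ p ∈ univ.filter (fun p : α × α => p.1 < p.2), F p.1 p.2 := by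
  refine prod_nbij' (fun p => (min (π p.1) (π p.2), max (π p.1) (π p.2)))
    (fun q => (min (π.symm q.1) (π.symm q.2), max (π.symm q.1) (π.symm q.2))) ?_ ?_ ?_ ?_ ?_ <;>
    rintro ⟨a, b⟩ h <;> simp only [mem_filter, mem_univ, true_and] at h
  · simpa using π.injective.ne h.ne'
  · simpa using π.symm.injective.ne h.ne'
  · rcases le_total (π a) (π b) with hab | hab <;> simp [hab, h.le]
  · rcases le_total (π.symm a) (π.symm b) with hab | hab <;> simp [hab, h.le]
  · rcases le_total (π a) (π b) with hab | hab <;> simp [hab, hF]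

@[simp]
theorem inversionProd_one (g : α → α → M) : inversionProd g 1 = 1 :=
  prod_eq_one fun _ hp => if_neg (not_lt_of_gt (mem_filter.1 hp).2)

theorem inversionProd_mul {g : α → α → M} (hg : ∀ x y, g x y * g y x = 1) (σ π : Perm α) :
    inversionProd g (σ * π) =
      inversionProd g σ * inversionProd (fun x y => g (σ x) (σ y)) π := by
  set F : α → α → M := fun x y =>
    if σ (max x y) < σ (min x y) then g (σ (min x y)) (σ (max x y)) else 1 with hF
  have hσ : inversionProd g σ =
      ∏ p ∈ univ.filter (fun p : α × α => p.1 < p.2), F (π p.1) (π p.2) := by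
    rw [prod_filter_lt_comp_perm π fun x y => by simp only [hF, min_comm, max_comm]]
    refine prod_congr rfl fun p hp => ?_
    simp only [mem_filter, mem_univ, true_and] at hp
    simp [hF, hp.le]
  rw [hσ, inversionProd, inversionProd, ← prod_mul_distrib]
  refine prod_congr rfl fun p hp => ?_
  simp only [mem_filter, mem_univ, true_and] at hp
  have hne : σ (π p.1) ≠ σ (π p.2) := (σ.injective.comp π.injective).ne hp.ne
  rcases (π.injective.ne hp.ne).lt_or_gt with h | h
  · simp only [hF, h.le, not_lt_of_gt h, min_eq_left, max_eq_right, if_false, mul_one]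
    rfl
  · rcases hne.lt_or_gt with hs | hs
    · simp [hF, h, h.le, hs, not_lt_of_gt hs, hg]
    · simp [hF, h, h.le, hs, not_lt_of_gt hs]

/-- Every pair `a < b` is an inversion of exactly one of `ρ` and `ρ * Fin.revPerm`. -/
theorem inversionProd_mul_inversionProd_mul_revPerm {n : ℕ} (g : Fin n → Fin n → M)
    (ρ : Perm (Fin n)) :
    inversionProd g ρ * inversionProd g (ρ * Fin.revPerm) =
      ∏ p ∈ univ.filter (fun p : Fin n × Fin n => p.1 < p.2), g p.2 p.1 := by
  have hrev : inversionProd g (ρ * Fin.revPerm) =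
      ∏ p ∈ univ.filter (fun p : Fin n × Fin n => p.1 < p.2),
        if ρ p.1 < ρ p.2 then g (ρ p.2) (ρ p.1) else 1 :=
    prod_nbij' (fun p => (p.2.rev, p.1.rev)) (fun p => (p.2.rev, p.1.rev))
      (by simp) (by simp) (by simp) (by simp) (by simp)
  set G : Fin n → Fin n → M := fun x y => g (max x y) (min x y) with hG
  calc inversionProd g ρ * inversionProd g (ρ * Fin.revPerm)
      = ∏ p ∈ univ.filter (fun p : Fin n × Fin n => p.1 < p.2), G (ρ p.1) (ρ p.2) := by
        rw [hrev, inversionProd, ← prod_mul_distrib]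
        refine prod_congr rfl fun p hp => ?_
        simp only [mem_filter, mem_univ, true_and] at hp
        rcases (ρ.injective.ne hp.ne).lt_or_gt with h | h <;> simp [hG, h, h.le, not_lt_of_gt h]
    _ = ∏ p ∈ univ.filter (fun p : Fin n × Fin n => p.1 < p.2), g p.2 p.1 := by
        rw [prod_filter_lt_comp_perm ρ fun x y => by simp only [hG, min_comm, max_comm]]
        refine prod_congr rfl fun p hp => ?_
        simp only [mem_filter, mem_univ, true_and] at hp
        simp [hG, hp.le]

theorem inversionProd_swap_castSucc_succ {n : ℕ} (g : Fin (n + 1) → Fin (n + 1) → M)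
    (i : Fin n) : inversionProd g (swap i.castSucc i.succ) = g i.succ i.castSucc := by
  have : univ.filter (fun p : Fin (n + 1) × Fin (n + 1) => p.1 < p.2 ∧
      swap i.castSucc i.succ p.2 < swap i.castSucc i.succ p.1) = {(i.castSucc, i.succ)} := by
    ext ⟨a, b⟩
    rw [mem_filter]
    simp only [mem_univ, true_and, mem_singleton, Prod.mk.injEq, swap_apply_def]
    split_ifs <;> simp only [Fin.ext_iff, Fin.lt_def, Fin.val_castSucc, Fin.val_succ] at * <;>
      omega
  rw [inversionProd, ← prod_filter, filter_filter, this, prod_singleton]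
  simp

end CommMonoid

theorem norm_inversionProd {M : Type*} [SeminormedCommRing M] [NormMulClass M] [NormOneClass M]
    {g : α → α → M} (hg : ∀ x y, ‖g x y‖ = 1) (π : Perm α) : ‖inversionProd g π‖ = 1 := by
  rw [inversionProd, norm_prod]
  exact prod_eq_one fun p _ => by split_ifs <;> simp [hg]

end Equiv.Perm

/-- The factor `S^π(θ)` in `(D(π)ψ)(θ) = S^π(θ) ψ(θ ∘ π)`, see `IsZamoRep.coeFn_apply`. -/
def zamoFactor (S₂ : ℝ → ℂ) {n : ℕ} (π : Equiv.Perm (Fin n)) (θ : Fin n → ℝ) : ℂ :=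
  π.inversionProd fun i j => S₂ (θ i - θ j)

section zamoFactor

variable {S₂ : ℝ → ℂ} {n : ℕ}

theorem zamoFactor_mul (hS₂ : ∀ t, S₂ t * S₂ (-t) = 1) (σ π : Equiv.Perm (Fin n))
    (θ : Fin n → ℝ) :
    zamoFactor S₂ (σ * π) θ = zamoFactor S₂ σ θ * zamoFactor S₂ π (fun m => θ (σ m)) :=
  Equiv.Perm.inversionProd_mul (fun x y => by rw [← neg_sub, mul_comm, hS₂]) σ π

theorem zamoFactor_tau (i : ℕ) (hi : i + 1 < n) (θ : Fin n → ℝ) :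
    zamoFactor S₂ (tau n i hi) θ = S₂ (θ ⟨i + 1, hi⟩ - θ ⟨i, Nat.lt_of_succ_lt hi⟩) := by
  obtain ⟨m, rfl⟩ : ∃ m, n = m + 1 := ⟨n - 1, by omega⟩
  exact Equiv.Perm.inversionProd_swap_castSucc_succ _ ⟨i, by omega⟩

theorem pairProd_eq_zamoFactor_mul (ρ : Equiv.Perm (Fin n)) (θ : Fin n → ℝ) :
    pairProd S₂ θ = zamoFactor S₂ ρ θ * zamoFactor S₂ (ρ * Fin.revPerm) θ :=
  (Equiv.Perm.inversionProd_mul_inversionProd_mul_revPerm (fun i j => S₂ (θ i - θ j)) ρ).symm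

theorem zamoFactor_revPerm (θ : Fin n → ℝ) : zamoFactor S₂ Fin.revPerm θ = pairProd S₂ θ := by
  simpa [zamoFactor] using (pairProd_eq_zamoFactor_mul (S₂ := S₂) 1 θ).symm

theorem norm_zamoFactor (hS₂abs : ∀ t, ‖S₂ t‖ = 1) (π : Equiv.Perm (Fin n)) (θ : Fin n → ℝ) :
    ‖zamoFactor S₂ π θ‖ = 1 :=
  Equiv.Perm.norm_inversionProd (fun _ _ => hS₂abs _) π

theorem norm_pairProd (hS₂abs : ∀ t, ‖S₂ t‖ = 1) (θ : Fin n → ℝ) : ‖pairProd S₂ θ‖ = 1 := by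
  rw [← zamoFactor_revPerm, norm_zamoFactor hS₂abs]

theorem conj_pairProd_mul_self (hS₂abs : ∀ t, ‖S₂ t‖ = 1) (θ : Fin n → ℝ) :
    starRingEnd ℂ (pairProd S₂ θ) * pairProd S₂ θ = 1 := by
  rw [conj_mul', norm_pairProd hS₂abs]; simp

theorem pairProd_mul_conj_zamoFactor (hS₂abs : ∀ t, ‖S₂ t‖ = 1) (hS₂ : ∀ t, S₂ t * S₂ (-t) = 1)
    (π : Equiv.Perm (Fin n)) (θ : Fin n → ℝ) :
    pairProd S₂ θ * starRingEnd ℂ (zamoFactor S₂ π θ) =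
      zamoFactor S₂ π θ * pairProd S₂ (fun m => θ (π m)) := by
  have hunit : starRingEnd ℂ (zamoFactor S₂ π θ) * zamoFactor S₂ π θ = 1 := by
    rw [conj_mul', norm_zamoFactor hS₂abs]; simp
  rw [pairProd_eq_zamoFactor_mul π, zamoFactor_mul hS₂, zamoFactor_revPerm]
  linear_combination (zamoFactor S₂ π θ * pairProd S₂ (fun m => θ (π m))) * hunit

end zamoFactor

theorem measurePreserving_comp_perm {ι : Type*} [Fintype ι] (σ : Equiv.Perm ι) :
    MeasurePreserving (fun (θ : ι → ℝ) m => θ (σ m)) volume volume := by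
  convert volume_measurePreserving_piCongrLeft (fun _ : ι => ℝ) σ.symm using 1
  funext θ m
  simpa using (MeasurableEquiv.piCongrLeft_apply_apply σ.symm (β := fun _ : ι => ℝ) θ (σ m)).symm

theorem mclosure_tau (n : ℕ) :
    Submonoid.closure {s | ∃ (i : ℕ) (hi : i + 1 < n), s = tau n i hi} = ⊤ := by
  cases n with
  | zero => exact Subsingleton.elim _ _
  | succ m =>
    rw [eq_top_iff, ← Equiv.Perm.mclosure_swap_castSucc_succ m]
    refine Submonoid.closure_mono ?_
    rintro _ ⟨i, rfl⟩
    exact ⟨i, by omega, rfl⟩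

theorem unitaryRep_mul_apply {G E : Type*} [Monoid G] [NormedAddCommGroup E]
    [InnerProductSpace ℂ E] [CompleteSpace E] {D : G →* unitary (E →L[ℂ] E)} (σ π : G) (x : E) :
    (D (σ * π) : E →L[ℂ] E) x = (D σ : E →L[ℂ] E) ((D π : E →L[ℂ] E) x) := by
  rw [map_mul]; rfl

section Representation

variable {S₂ : ℝ → ℂ} {n : ℕ} {D : Equiv.Perm (Fin n) →* unitary (Hsp n →L[ℂ] Hsp n)}

theorem IsZamoRep.coeFn_apply (hS₂ : ∀ t, S₂ t * S₂ (-t) = 1) (hD : IsZamoRep S₂ n D)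
    (π : Equiv.Perm (Fin n)) (ψ : Hsp n) :
    ⇑((D π : Hsp n →L[ℂ] Hsp n) ψ) =ᵐ[volume]
      fun θ => zamoFactor S₂ π θ * ψ (fun m => θ (π m)) := by
  induction π using Submonoid.induction_of_closure_eq_top_left (mclosure_tau n)
    generalizing ψ with
  | one => simp [zamoFactor]
  | mul_left τ hτ π ih =>
    obtain ⟨i, hi, rfl⟩ := hτ
    filter_upwards [hD i hi ((D π : Hsp n →L[ℂ] Hsp n) ψ),
      (measurePreserving_comp_perm (tau n i hi)).quasiMeasurePreserving.ae_eq (ih ψ)]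
      with θ hτθ hπθ
    simp only [Function.comp_apply] at hπθ
    rw [unitaryRep_mul_apply, hτθ, hπθ, zamoFactor_mul hS₂, zamoFactor_tau, mul_assoc]
    rfl

theorem symProj_apply (ψ : Hsp n) :
    symProj D ψ = (n.factorial : ℂ)⁻¹ • ∑ π, (D π : Hsp n →L[ℂ] Hsp n) ψ := by
  simp [symProj]

theorem symProj_coe_map_apply (σ : Equiv.Perm (Fin n)) (ψ : Hsp n) :
    symProj D ((D σ : Hsp n →L[ℂ] Hsp n) ψ) = symProj D ψ := by
  simp only [symProj_apply, ← unitaryRep_mul_apply]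
  exact congrArg _ (Fintype.sum_equiv (Equiv.mulRight σ) _ _ fun _ => rfl)

theorem coe_map_symProj_apply (σ : Equiv.Perm (Fin n)) (ψ : Hsp n) :
    (D σ : Hsp n →L[ℂ] Hsp n) (symProj D ψ) = symProj D ψ := by
  simp only [symProj_apply, map_smul, map_sum, ← unitaryRep_mul_apply]
  exact congrArg _ (Fintype.sum_equiv (Equiv.mulLeft σ) _ _ fun _ => rfl)

end Representation

def IsModularConj (S₂ : ℝ → ℂ) {n : ℕ} (J : Hsp n → Hsp n) : Prop :=
  ∀ ψ : Hsp n, ∀ᵐ θ ∂(volume : Measure (Fin n → ℝ)),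
    (J ψ) θ = pairProd S₂ θ * starRingEnd ℂ (ψ θ)

namespace IsModularConj

variable {S₂ : ℝ → ℂ} {n : ℕ} {J : Hsp n → Hsp n} (hJ : IsModularConj S₂ J)
include hJ

theorem map_add (ψ φ : Hsp n) : J (ψ + φ) = J ψ + J φ := by
  apply Lp.ext
  filter_upwards [hJ (ψ + φ), hJ ψ, hJ φ, Lp.coeFn_add (J ψ) (J φ), Lp.coeFn_add ψ φ]
    with θ h h₁ h₂ hJadd hadd
  rw [h, hJadd, Pi.add_apply, hadd, Pi.add_apply, h₁, h₂, _root_.map_add, mul_add]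

theorem map_smul (c : ℂ) (ψ : Hsp n) : J (c • ψ) = starRingEnd ℂ c • J ψ := by
  apply Lp.ext
  filter_upwards [hJ (c • ψ), hJ ψ, Lp.coeFn_smul (starRingEnd ℂ c) (J ψ), Lp.coeFn_smul c ψ]
    with θ h h₁ hJsmul hsmul
  rw [h, hJsmul, Pi.smul_apply, hsmul, Pi.smul_apply, h₁, smul_eq_mul, smul_eq_mul, map_mul]
  ring

theorem map_sum {ι : Type*} (s : Finset ι) (f : ι → Hsp n) :
    J (∑ i ∈ s, f i) = ∑ i ∈ s, J (f i) :=
  _root_.map_sum (AddMonoidHom.mk' J hJ.map_add) f s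

theorem norm_apply (hS₂abs : ∀ t, ‖S₂ t‖ = 1) (ψ : Hsp n) : ‖J ψ‖ = ‖ψ‖ := by
  rw [Lp.norm_def, Lp.norm_def]
  congr 1
  refine eLpNorm_congr_norm_ae ?_
  filter_upwards [hJ ψ] with θ h
  rw [h, norm_mul, norm_pairProd hS₂abs, Complex.norm_conj, one_mul]

theorem apply_apply (hS₂abs : ∀ t, ‖S₂ t‖ = 1) (ψ : Hsp n) : J (J ψ) = ψ := by
  apply Lp.ext
  filter_upwards [hJ (J ψ), hJ ψ] with θ h₂ h₁
  rw [h₂, h₁, map_mul, Complex.conj_conj, ← mul_assoc, mul_comm (pairProd S₂ θ),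
    conj_pairProd_mul_self hS₂abs, one_mul]

theorem inner_apply (hS₂abs : ∀ t, ‖S₂ t‖ = 1) (ψ φ : Hsp n) :
    inner ℂ (J ψ) (J φ) = inner ℂ φ ψ := by
  rw [L2.inner_def, L2.inner_def]
  refine integral_congr_ae ?_
  filter_upwards [hJ ψ, hJ φ] with θ hψ hφ
  rw [RCLike.inner_apply', RCLike.inner_apply', hψ, hφ, map_mul, Complex.conj_conj]
  linear_combination (starRingEnd ℂ (φ θ) * ψ θ) * conj_pairProd_mul_self hS₂abs θ

variable {D : Equiv.Perm (Fin n) →* unitary (Hsp n →L[ℂ] Hsp n)}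

theorem apply_coe_map_apply (hS₂abs : ∀ t, ‖S₂ t‖ = 1) (hS₂ : ∀ t, S₂ t * S₂ (-t) = 1)
    (hD : IsZamoRep S₂ n D) (π : Equiv.Perm (Fin n)) (ψ : Hsp n) :
    J ((D π : Hsp n →L[ℂ] Hsp n) ψ) = (D π : Hsp n →L[ℂ] Hsp n) (J ψ) := by
  apply Lp.ext
  filter_upwards [hJ ((D π : Hsp n →L[ℂ] Hsp n) ψ), hD.coeFn_apply hS₂ π ψ,
    hD.coeFn_apply hS₂ π (J ψ),
    (measurePreserving_comp_perm π).quasiMeasurePreserving.ae_eq (hJ ψ)] with θ h hDψ hDJ hJπ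
  simp only [Function.comp_apply] at hJπ
  rw [h, hDψ, hDJ, hJπ, map_mul, ← mul_assoc, pairProd_mul_conj_zamoFactor hS₂abs hS₂, mul_assoc]

theorem map_symProj (hS₂abs : ∀ t, ‖S₂ t‖ = 1) (hS₂ : ∀ t, S₂ t * S₂ (-t) = 1)
    (hD : IsZamoRep S₂ n D) (ψ : Hsp n) : J (symProj D ψ) = symProj D (J ψ) := by
  rw [symProj_apply, symProj_apply, hJ.map_smul, hJ.map_sum, map_inv₀, map_natCast]
  simp only [hJ.apply_coe_map_apply hS₂abs hS₂ hD]

theorem eq_coe_map_revPerm (hS₂ : ∀ t, S₂ t * S₂ (-t) = 1) (hD : IsZamoRep S₂ n D)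
    {K : Hsp n → Hsp n}
    (hK : ∀ ψ : Hsp n, ∀ᵐ θ ∂(volume : Measure (Fin n → ℝ)),
      (K ψ) θ = starRingEnd ℂ (ψ (fun i => θ i.rev))) (ψ : Hsp n) :
    J ψ = (D Fin.revPerm : Hsp n →L[ℂ] Hsp n) (K ψ) := by
  apply Lp.ext
  filter_upwards [hJ ψ, hD.coeFn_apply hS₂ Fin.revPerm (K ψ),
    (measurePreserving_comp_perm Fin.revPerm).quasiMeasurePreserving.ae_eq (hK ψ)]
    with θ h hDK hKrev
  simp only [Function.comp_apply, Fin.revPerm_apply, Fin.rev_rev] at hDK hKrev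
  rw [h, hDK, hKrev, zamoFactor_revPerm]

end IsModularConj

theorem statement12_general (S₂ : ℝ → ℂ)
    (hS₂abs : ∀ θ : ℝ, ‖S₂ θ‖ = 1)
    (hS₂sym : ∀ θ : ℝ, S₂ (-θ) = starRingEnd ℂ (S₂ θ))
    (n : ℕ)
    (D : Equiv.Perm (Fin n) →* unitary (Hsp n →L[ℂ] Hsp n))
    (hD : IsZamoRep S₂ n D)
    (J : Hsp n → Hsp n)
    (hJ : ∀ ψ : Hsp n, ∀ᵐ θ ∂(volume : Measure (Fin n → ℝ)),
      (J ψ) θ = pairProd S₂ θ * starRingEnd ℂ (ψ θ))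
    (K : Hsp n → Hsp n)
    (hK : ∀ ψ : Hsp n, ∀ᵐ θ ∂(volume : Measure (Fin n → ℝ)),
      (K ψ) θ = starRingEnd ℂ (ψ (fun i => θ i.rev))) :
    -- (a) J is an antilinear isometric involution
    (∀ ψ φ : Hsp n, J (ψ + φ) = J ψ + J φ) ∧
    (∀ (c : ℂ) (ψ : Hsp n), J (c • ψ) = (starRingEnd ℂ c) • J ψ) ∧
    (∀ ψ : Hsp n, ‖J ψ‖ = ‖ψ‖) ∧
    (∀ ψ : Hsp n, J (J ψ) = ψ) ∧
    (∀ ψ φ : Hsp n, (inner ℂ (J ψ) (J φ) : ℂ) = (inner ℂ φ ψ : ℂ)) ∧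
    -- (b) J∘Pₙ = Pₙ∘Kₙ, J = K on ℋₙ, and J(ℋₙ) = ℋₙ
    (∀ ψ : Hsp n, J (symProj D ψ) = symProj D (K ψ)) ∧
    (∀ ψ : Hsp n, symProj D ψ = ψ → J ψ = K ψ) ∧
    (J '' {ψ : Hsp n | symProj D ψ = ψ} = {ψ : Hsp n | symProj D ψ = ψ}) := by
  have hS₂ (t : ℝ) : S₂ t * S₂ (-t) = 1 := by
    rw [hS₂sym, mul_conj', hS₂abs]; simp
  have hJ : IsModularConj S₂ J := hJ
  have hJK := hJ.eq_coe_map_revPerm hS₂ hD hK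
  have hfix (ψ : Hsp n) (hψ : symProj D ψ = ψ) : symProj D (J ψ) = J ψ := by
    rw [← hJ.map_symProj hS₂abs hS₂ hD, hψ]
  refine ⟨hJ.map_add, hJ.map_smul, hJ.norm_apply hS₂abs, hJ.apply_apply hS₂abs,
    hJ.inner_apply hS₂abs, fun ψ => ?_, fun ψ hψ => ?_, ?_⟩
  · rw [hJ.map_symProj hS₂abs hS₂ hD, hJK, symProj_coe_map_apply]
  · have hrev (x : Hsp n) :
        (D Fin.revPerm : Hsp n →L[ℂ] Hsp n) ((D Fin.revPerm : Hsp n →L[ℂ] Hsp n) x) = x := by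
      rw [← unitaryRep_mul_apply, show Fin.revPerm * Fin.revPerm = (1 : Equiv.Perm (Fin n)) from
        Equiv.ext Fin.rev_rev, map_one]
      rfl
    calc J ψ = (D Fin.revPerm : Hsp n →L[ℂ] Hsp n) (symProj D (J ψ)) := by
          rw [coe_map_symProj_apply, hfix ψ hψ]
      _ = K ψ := by rw [hfix ψ hψ, hJK, hrev]
  · refine Set.Subset.antisymm ?_ fun ψ hψ => ⟨J ψ, hfix ψ hψ, hJ.apply_apply hS₂abs ψ⟩
    rintro _ ⟨ψ, hψ, rfl⟩
    exact hfix ψ hψ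

/-- Properties of the modular conjugation
(Jψ)(θ) = ∏_{i<j} S₂(θⱼ−θᵢ)·conj(ψ(θ)): it is an antilinear isometric involution with
⟨Jψ, Jφ⟩ = ⟨φ, ψ⟩; moreover J∘Pₙ = Pₙ∘Kₙ with (Kψ)(θ₁,…,θₙ) = conj(ψ(θₙ,…,θ₁)), so
J = K on ℋₙ and J maps ℋₙ onto itself. -/
theorem statement12 (S₂ : ℝ → ℂ) (hS₂meas : Measurable S₂)
    (hS₂abs : ∀ θ : ℝ, ‖S₂ θ‖ = 1)
    (hS₂sym : ∀ θ : ℝ, S₂ (-θ) = starRingEnd ℂ (S₂ θ))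
    (n : ℕ)
    (D : Equiv.Perm (Fin n) →* unitary (Hsp n →L[ℂ] Hsp n))
    (hD : IsZamoRep S₂ n D)
    (J : Hsp n → Hsp n)
    (hJ : ∀ ψ : Hsp n, ∀ᵐ θ ∂(volume : Measure (Fin n → ℝ)),
      (J ψ) θ = pairProd S₂ θ * starRingEnd ℂ (ψ θ))
    (K : Hsp n → Hsp n)
    (hK : ∀ ψ : Hsp n, ∀ᵐ θ ∂(volume : Measure (Fin n → ℝ)),
      (K ψ) θ = starRingEnd ℂ (ψ (fun i => θ i.rev))) :
    -- (a) J is an antilinear isometric involution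
    (∀ ψ φ : Hsp n, J (ψ + φ) = J ψ + J φ) ∧
    (∀ (c : ℂ) (ψ : Hsp n), J (c • ψ) = (starRingEnd ℂ c) • J ψ) ∧
    (∀ ψ : Hsp n, ‖J ψ‖ = ‖ψ‖) ∧
    (∀ ψ : Hsp n, J (J ψ) = ψ) ∧
    (∀ ψ φ : Hsp n, (inner ℂ (J ψ) (J φ) : ℂ) = (inner ℂ φ ψ : ℂ)) ∧
    -- (b) J∘Pₙ = Pₙ∘Kₙ, J = K on ℋₙ, and J(ℋₙ) = ℋₙ
    (∀ ψ : Hsp n, J (symProj D ψ) = symProj D (K ψ)) ∧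
    (∀ ψ : Hsp n, symProj D ψ = ψ → J ψ = K ψ) ∧
    (J '' {ψ : Hsp n | symProj D ψ = ψ} = {ψ : Hsp n | symProj D ψ = ψ}) :=
  statement12_general S₂ hS₂abs hS₂sym n D hD J hJ K hK

end
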